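/- With notation as above, x_{n-i} is a non-zerodivisor on S/(I, x_n,...,x_{n-i+1}) if and only if c_i(I) = -∞, i.e., if and only if Ĵ_i = J_i. -/

import Mathlib

open MvPolynomial

noncomputable section

/-- Coercion of a natural number into `WithBot ℕ∞` (degrees, with `⊥ = -∞`, `⊤ = ∞`). -/
def natW (r : ℕ) : WithBot ℕ∞ := ((r : ℕ∞) : WithBot ℕ∞)

/-- The total degree `|a|` of an exponent vector. -/
def degOf {n : ℕ} (a : Fin n →₀ ℕ) : ℕ := a.sum fun _ e => e

variable {k : Type*} [Field k] {n : ℕ}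

/-- The top degree in which the graded pieces of two ideals differ
(`⊥` if they never differ, `⊤` if they differ in unboundedly many degrees). -/
def topDiff (I J : Ideal (MvPolynomial (Fin n) k)) : WithBot ℕ∞ :=
  sSup {x | ∃ r : ℕ, x = natW r ∧
    ¬ ∀ f : MvPolynomial (Fin n) k, f.IsHomogeneous r → (f ∈ I ↔ f ∈ J)}

/-- `I` is a homogeneous (graded) ideal. -/
def HomogIdeal (I : Ideal (MvPolynomial (Fin n) k)) : Prop :=
  ∀ f ∈ I, ∀ r : ℕ, homogeneousComponent r f ∈ I

/-- The maximal homogeneous ideal `𝔪 = (x₁, …, xₙ)`. -/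
def maxIdl (k : Type*) [Field k] (n : ℕ) : Ideal (MvPolynomial (Fin n) k) :=
  Ideal.span (Set.range X)

/-- The ideal `(I, z₁, …, z_i)`. -/
def partIdeal (I : Ideal (MvPolynomial (Fin n) k)) {m : ℕ}
    (z : Fin m → MvPolynomial (Fin n) k) (i : ℕ) : Ideal (MvPolynomial (Fin n) k) :=
  I ⊔ Ideal.span (z '' {j : Fin m | (j : ℕ) < i})

/-- `a_z^i(S/I) = sup { r : [(I,z₁,…,z_i) : z_{i+1}]_r ≠ (I,z₁,…,z_i)_r }`. -/
def aInv (I : Ideal (MvPolynomial (Fin n) k)) {m : ℕ}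
    (z : Fin m → MvPolynomial (Fin n) k) (i : Fin m) : WithBot ℕ∞ :=
  topDiff ((partIdeal I z (i : ℕ)).colon (Ideal.span {z i})) (partIdeal I z (i : ℕ))

/-- `z` is a filter-regular sequence for `S/I`: each `z_{i+1}` avoids every associated
prime of `(I,z₁,…,z_i)` other than the maximal homogeneous ideal. -/
def FilterRegular (I : Ideal (MvPolynomial (Fin n) k)) {m : ℕ}
    (z : Fin m → MvPolynomial (Fin n) k) : Prop :=
  ∀ i : Fin m, ∀ p : Ideal (MvPolynomial (Fin n) k),
    IsAssociatedPrime p (MvPolynomial (Fin n) k ⧸ partIdeal I z (i : ℕ)) →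
    p ≠ maxIdl k n → z i ∉ p

/-- The saturation `⋃_{m ≥ 1} (J : z^m)`. -/
def satIdeal (J : Ideal (MvPolynomial (Fin n) k)) (z : MvPolynomial (Fin n) k) :
    Ideal (MvPolynomial (Fin n) k) :=
  ⨆ m : ℕ, J.colon (Ideal.span {z ^ (m + 1)})

/-- `a <_drevlex b` for the degree reverse lexicographic order with `x₁ > x₂ > … > xₙ`. -/
def RevLexLT {n : ℕ} (a b : Fin n →₀ ℕ) : Prop :=
  degOf a < degOf b ∨
    (degOf a = degOf b ∧ ∃ j : Fin n, b j < a j ∧ ∀ l : Fin n, j < l → a l = b l)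

/-- The initial ideal of `I` with respect to the reverse lexicographic order:
the ideal generated by the leading monomials of the nonzero elements of `I`. -/
def initialIdeal (I : Ideal (MvPolynomial (Fin n) k)) : Ideal (MvPolynomial (Fin n) k) :=
  Ideal.span {g | ∃ f ∈ I, f ≠ 0 ∧ ∃ μ ∈ f.support,
    (∀ ν ∈ f.support, ν = μ ∨ RevLexLT ν μ) ∧ g = monomial μ (1 : k)}

/-- The evaluation `x_{n-i+1} = ⋯ = x_n = 0`. -/
def evalZero (k : Type*) [Field k] (n i : ℕ) :
    MvPolynomial (Fin n) k →ₐ[k] MvPolynomial (Fin n) k :=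
  aeval fun j : Fin n => if (j : ℕ) < n - i then X j else 0

/-- The evaluation `x_{n-i+1} = ⋯ = x_n = 0`, `x_{n-i} = 1`. -/
def evalOne (k : Type*) [Field k] (n i : ℕ) :
    MvPolynomial (Fin n) k →ₐ[k] MvPolynomial (Fin n) k :=
  aeval fun j : Fin n =>
    if (j : ℕ) < n - i - 1 then X j else if (j : ℕ) = n - i - 1 then 1 else 0

/-- `J_i`: the ideal obtained from `In(I)` by evaluating `x_{n-i+1} = ⋯ = x_n = 0`. -/
def Jlow (i : ℕ) (I : Ideal (MvPolynomial (Fin n) k)) : Ideal (MvPolynomial (Fin n) k) :=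
  Ideal.map (evalZero k n i) (initialIdeal I)

/-- `J̃_i`: the ideal obtained from `J_i` by the further evaluation `x_{n-i} = 1`. -/
def Jtil (i : ℕ) (I : Ideal (MvPolynomial (Fin n) k)) : Ideal (MvPolynomial (Fin n) k) :=
  Ideal.map (evalOne k n i) (initialIdeal I)

/-- `c_i(I) = sup { r : (J̃_i/J_i)_r ≠ 0 }`, computed in `S_i = k[x₁,…,x_{n-i}]`. -/
def cInv (i : ℕ) (I : Ideal (MvPolynomial (Fin n) k)) : WithBot ℕ∞ :=
  sSup {x | ∃ r : ℕ, x = natW r ∧ ∃ f : MvPolynomial (Fin n) k,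
    f ∈ Jtil i I ∧ f ∈ supported k {j : Fin n | (j : ℕ) < n - i} ∧
    f.IsHomogeneous r ∧ f ∉ Jlow i I}

/-- `r(I) = sup { r : (S_d/J_d)_r ≠ 0 }`. -/
def rInv (d : ℕ) (I : Ideal (MvPolynomial (Fin n) k)) : WithBot ℕ∞ :=
  sSup {x | ∃ r : ℕ, x = natW r ∧ ∃ f : MvPolynomial (Fin n) k,
    f ∈ supported k {j : Fin n | (j : ℕ) < n - d} ∧ f.IsHomogeneous r ∧ f ∉ Jlow d I}

/-- The partial regularity `reg_t(S/I)`, via its characterization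
`reg_t(S/I) = max_i a_z^i(S/I)` for any filter-regular sequence `z` of `t+1` linear forms
([T1, Proposition 2.2]; equal to `max { aᵢ(S/I) + i : i ≤ t }` in terms of local cohomology). -/
def regT (t : ℕ) (I : Ideal (MvPolynomial (Fin n) k)) : WithBot ℕ∞ :=
  sSup {x | ∃ z : Fin (t + 1) → MvPolynomial (Fin n) k,
    (∀ j, (z j).IsHomogeneous 1) ∧ FilterRegular I z ∧
    x = ⨆ i : Fin (t + 1), aInv I z i}

/-- The Castelnuovo–Mumford regularity `reg(S/I)`, via its characterization
`reg(S/I) = max { a_z^0, …, a_z^{d-1}, r_z(S/I) }` for any filter-regular sequence `z`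
of `d = dim S/I` linear forms ([BS, Theorem 1.10], [T1, Corollary 3.3]). -/
def regCM (I : Ideal (MvPolynomial (Fin n) k)) : WithBot ℕ∞ :=
  sSup {x | ∃ d : ℕ, ringKrullDim (MvPolynomial (Fin n) k ⧸ I) = natW d ∧
    ∃ z : Fin d → MvPolynomial (Fin n) k,
      (∀ j, (z j).IsHomogeneous 1) ∧ FilterRegular I z ∧
      x = (⨆ i : Fin d, aInv I z i) ⊔ topDiff ⊤ (I ⊔ Ideal.span (Set.range z))}

/-- The exponent vectors of the minimal monomial generators of a monomial ideal. -/
def minGens (I : Ideal (MvPolynomial (Fin n) k)) : Set (Fin n →₀ ℕ) :=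
  {μ | monomial μ (1 : k) ∈ I ∧
    ∀ ν : Fin n →₀ ℕ, monomial ν (1 : k) ∈ I → ν ≤ μ → ν = μ}

/-- `E_i`: the exponent vectors of the minimal generators of `In(I)` involving none of
the variables `x_{n-i+1}, …, x_n`. -/
def Evar (i : ℕ) (I : Ideal (MvPolynomial (Fin n) k)) : Set (Fin n →₀ ℕ) :=
  {μ ∈ minGens (initialIdeal I) | ∀ j : Fin n, n - i ≤ (j : ℕ) → μ j = 0}

/-- The set `F` of corners of the staircase determined by `E`:
vectors `a = max(v₁,…,v_s) - (1,…,1)` where `v j ∈ E`, the `j`-th coordinate of `v j`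
strictly exceeds that of `v h` for `h ≠ j`, and `a ≱ w` for all `w ∈ E`. -/
def corners {s : ℕ} (E : Set (Fin s →₀ ℕ)) : Set (Fin s →₀ ℕ) :=
  {a | (∃ v : Fin s → (Fin s →₀ ℕ), (∀ j, v j ∈ E) ∧
      (∀ j h : Fin s, h ≠ j → v h j < v j j) ∧
      ∀ l : Fin s, a l + 1 = Finset.univ.sup fun j => v j l) ∧
    ∀ w ∈ E, ¬ w ≤ a}

/-!
Setting `x_{n-i+1}, …, x_n` to zero identifies `S/(I, x_n, …, x_{n-i+1})` with a quotient of
`k[x_1, …, x_{n-i}]`. Since revlex ranks the terms containing the last variables lowest in each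
degree, the leading exponents of the homogeneous elements of this quotient's ideal are exactly
the generators of `J_i`, so the question becomes Bayer–Stillman's criterion for the last variable
`x = x_{n-i}`.

If `J̃_i = J_i` and `x f` lies in the ideal, then `x · in(f) ∈ J_i`, hence `in(f) ∈ J̃_i = J_i`,
and the leading term of `f` can be cancelled by an element of the ideal; induction along the
well-founded revlex order gives `f` in the ideal. Conversely, a monomial `u ∉ J_i` with
`x u ∈ J_i` is the leading term of some `g` of the ideal; revlex forces `x` to divide every term
of `g`, and `g / x` is a witness against `x` being a non-zerodivisor. Both `J_i` and `J̃_i` are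
monomial ideals, so `J̃_i ≠ J_i` exactly when some monomial of `J̃_i` in `x_1, …, x_{n-i}` is
missing from `J_i`, that is, when `c_i(I) > -∞`.
-/

/-! ### The revlex order -/

theorem degOf_eq_degree (a : Fin n →₀ ℕ) : degOf a = a.degree := rfl

theorem degOf_add (a b : Fin n →₀ ℕ) : degOf (a + b) = degOf a + degOf b :=
  map_add Finsupp.degree a b

theorem weight_one_eq_degOf (a : Fin n →₀ ℕ) : Finsupp.weight 1 a = degOf a := by
  rw [degOf_eq_degree, Finsupp.degree_eq_weight_one]
  rfl

theorem RevLexLT.degOf_le {a b : Fin n →₀ ℕ} (h : RevLexLT a b) : degOf a ≤ degOf b := by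
  rcases h with h | ⟨h, -⟩ <;> omega

theorem RevLexLT.asymm {a b : Fin n →₀ ℕ} (h : RevLexLT a b) : ¬ RevLexLT b a := by
  rcases h with hd | ⟨hd, j, hj, htail⟩
  · rintro (hd' | ⟨hd', -⟩) <;> omega
  · rintro (hd' | ⟨-, j', hj', htail'⟩)
    · omega
    · rcases lt_trichotomy j j' with hlt | rfl | hgt
      · have := htail j' hlt; omega
      · omega
      · have := htail' j hgt; omega

theorem RevLexLT.irrefl (a : Fin n →₀ ℕ) : ¬ RevLexLT a a := fun h => h.asymm h

theorem RevLexLT.trans {a b c : Fin n →₀ ℕ} (h₁ : RevLexLT a b) (h₂ : RevLexLT b c) :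
    RevLexLT a c := by
  rcases h₁ with hd₁ | ⟨hd₁, j₁, hj₁, ht₁⟩ <;> rcases h₂ with hd₂ | ⟨hd₂, j₂, hj₂, ht₂⟩
  · exact Or.inl (hd₁.trans hd₂)
  · exact Or.inl (by omega)
  · exact Or.inl (by omega)
  refine Or.inr ⟨hd₁.trans hd₂, ?_⟩
  rcases lt_trichotomy j₁ j₂ with hlt | rfl | hgt
  · exact ⟨j₂, ht₁ j₂ hlt ▸ hj₂, fun l hl => (ht₁ l (hlt.trans hl)).trans (ht₂ l hl)⟩
  · exact ⟨j₁, hj₂.trans hj₁, fun l hl => (ht₁ l hl).trans (ht₂ l hl)⟩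
  · exact ⟨j₁, ht₂ j₁ hgt ▸ hj₁, fun l hl => (ht₁ l hl).trans (ht₂ l (hgt.trans hl))⟩

theorem revLexLT_trichotomy (a b : Fin n →₀ ℕ) : RevLexLT a b ∨ a = b ∨ RevLexLT b a := by
  rcases lt_trichotomy (degOf a) (degOf b) with hd | hd | hd
  · exact Or.inl (Or.inl hd)
  swap
  · exact Or.inr (Or.inr (Or.inl hd))
  by_cases hab : a = b
  · exact Or.inr (Or.inl hab)
  classical
  obtain ⟨j, hj, hmax⟩ := (Finset.univ.filter fun j => a j ≠ b j).exists_max_image id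
    (by simpa [Finset.filter_nonempty_iff] using Finsupp.ne_iff.mp hab)
  simp only [Finset.mem_filter, Finset.mem_univ, true_and, id] at hj hmax
  have htail : ∀ l, j < l → a l = b l := fun l hl => by
    by_contra h
    exact (hmax l h).not_gt hl
  rcases Nat.lt_or_gt_of_ne hj with hlt | hgt
  · exact Or.inr (Or.inr (Or.inr ⟨hd.symm, j, hlt, fun l hl => (htail l hl).symm⟩))
  · exact Or.inl (Or.inr ⟨hd, j, hgt, htail⟩)

theorem RevLexLT.add_right {a b : Fin n →₀ ℕ} (c : Fin n →₀ ℕ) (h : RevLexLT a b) :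
    RevLexLT (a + c) (b + c) := by
  simp only [RevLexLT, degOf_add, Finsupp.add_apply]
  rcases h with hd | ⟨hd, j, hj, ht⟩
  · exact Or.inl (by omega)
  · exact Or.inr ⟨by omega, j, by omega, fun l hl => by rw [ht l hl]⟩

theorem revLexLT_of_degOf_eq {m : ℕ} {a b : Fin n →₀ ℕ} (hd : degOf a = degOf b)
    (hb : ∀ l : Fin n, m ≤ (l : ℕ) → b l = 0) {l : Fin n} (hl : m ≤ (l : ℕ)) (ha : a l ≠ 0) :
    RevLexLT a b := by
  rcases revLexLT_trichotomy a b with hab | rfl | ⟨hd' | ⟨-, j, hj, ht⟩⟩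
  · exact hab
  · exact absurd (hb l hl) ha
  · omega
  · have hjl : j < l := by
      by_contra h
      have := hb j (hl.trans (by simpa using h))
      omega
    exact absurd (ht l hjl ▸ hb l hl) ha

/-- The `ncard` of a finite set: revlex refines the degree. -/
def revLexRank (a : Fin n →₀ ℕ) : ℕ := {ν | RevLexLT ν a}.ncard

theorem revLexRank_lt {a b : Fin n →₀ ℕ} (h : RevLexLT a b) : revLexRank a < revLexRank b :=
  Set.ncard_lt_ncard ⟨fun _ hν => RevLexLT.trans hν h, fun hsub => (hsub h).irrefl⟩
    ((Finsupp.finite_of_degree_le (degOf b)).subset fun _ hν => RevLexLT.degOf_le hν)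

theorem wellFounded_revLexLT : WellFounded (@RevLexLT n) :=
  Subrelation.wf revLexRank_lt (measure revLexRank).wf

theorem Finset.exists_revLex_max (s : Finset (Fin n →₀ ℕ)) (hs : s.Nonempty) :
    ∃ μ ∈ s, ∀ ν ∈ s, ν = μ ∨ RevLexLT ν μ := by
  obtain ⟨μ, hμ, hmax⟩ := s.exists_max_image revLexRank hs
  refine ⟨μ, hμ, fun ν hν => ?_⟩
  rcases revLexLT_trichotomy ν μ with h | h | h
  · exact Or.inr h
  · exact Or.inl h
  · exact absurd (hmax ν hν) (revLexRank_lt h).not_ge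

/-! ### Leading exponents -/

theorem mem_support_monomial_one_mul {σ R : Type*} [CommSemiring R] {δ ν : σ →₀ ℕ}
    {f : MvPolynomial σ R} :
    ν ∈ (monomial δ (1 : R) * f).support ↔ δ ≤ ν ∧ ν - δ ∈ f.support := by
  classical
  simp only [mem_support_iff, coeff_monomial_mul', one_mul]
  split_ifs with h <;> simp [h]

def IsLeadingExp (f : MvPolynomial (Fin n) k) (μ : Fin n →₀ ℕ) : Prop :=
  μ ∈ f.support ∧ ∀ ν ∈ f.support, ν = μ ∨ RevLexLT ν μ

theorem exists_isLeadingExp {f : MvPolynomial (Fin n) k} (hf : f ≠ 0) :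
    ∃ μ, IsLeadingExp f μ :=
  Finset.exists_revLex_max f.support (support_nonempty.mpr hf)

namespace IsLeadingExp

variable {f g : MvPolynomial (Fin n) k} {μ ν : Fin n →₀ ℕ}

theorem ne_zero (h : IsLeadingExp f μ) : f ≠ 0 := by
  rintro rfl
  simp [IsLeadingExp] at h

theorem unique (h₁ : IsLeadingExp f μ) (h₂ : IsLeadingExp f ν) : μ = ν := by
  rcases h₁.2 ν h₂.1 with rfl | hνμ
  · rfl
  rcases h₂.2 μ h₁.1 with rfl | hμν
  · rfl
  exact absurd hνμ hμν.asymm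

theorem revLexLT (h : IsLeadingExp f μ) (hν : ν ∈ f.support) (hne : ν ≠ μ) : RevLexLT ν μ :=
  (h.2 ν hν).resolve_left hne

theorem monomial_one_mul (δ : Fin n →₀ ℕ) (h : IsLeadingExp f μ) :
    IsLeadingExp (monomial δ (1 : k) * f) (δ + μ) := by
  refine ⟨mem_support_monomial_one_mul.mpr ⟨le_self_add, by simpa using h.1⟩, fun ν hν => ?_⟩
  obtain ⟨hδν, hν⟩ := mem_support_monomial_one_mul.mp hν
  rw [← add_tsub_cancel_of_le hδν]
  rcases h.2 _ hν with he | hlt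
  · exact Or.inl (by rw [he])
  · exact Or.inr (by simpa only [add_comm δ] using hlt.add_right δ)

theorem of_X_mul {j : Fin n} (h : IsLeadingExp (X j * f) (Finsupp.single j 1 + μ)) :
    IsLeadingExp f μ := by
  obtain ⟨ν, hν⟩ := exists_isLeadingExp (right_ne_zero_of_mul h.ne_zero)
  have := (hν.monomial_one_mul (Finsupp.single j 1)).unique h
  rwa [add_left_cancel this] at hν

theorem revLexLT_of_mem_support_sub (hf : IsLeadingExp f μ) (hg : IsLeadingExp g μ)
    (hν : ν ∈ (f - (coeff μ f / coeff μ g) • g).support) : RevLexLT ν μ := by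
  classical
  have hne : ν ≠ μ := by
    rintro rfl
    rw [mem_support_iff, coeff_sub, coeff_smul, smul_eq_mul,
      div_mul_cancel₀ _ (mem_support_iff.mp hg.1), sub_self] at hν
    exact hν rfl
  rcases Finset.mem_union.mp (support_sub _ f _ hν) with hνf | hνg
  · exact hf.revLexLT hνf hne
  · exact hg.revLexLT (support_smul hνg) hne

end IsLeadingExp

theorem MvPolynomial.IsHomogeneous.degOf_eq {f : MvPolynomial (Fin n) k} {r : ℕ}
    (hf : f.IsHomogeneous r) {ν : Fin n →₀ ℕ} (hν : ν ∈ f.support) : degOf ν = r := by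
  rw [← weight_one_eq_degOf]
  exact hf (mem_support_iff.mp hν)

theorem MvPolynomial.IsHomogeneous.of_support_subset {f g : MvPolynomial (Fin n) k} {r : ℕ}
    (hf : f.IsHomogeneous r) (h : g.support ⊆ f.support) : g.IsHomogeneous r :=
  fun _ hd => hf (mem_support_iff.mp (h (mem_support_iff.mpr hd)))

theorem MvPolynomial.IsHomogeneous.of_X_mul {f : MvPolynomial (Fin n) k} {j : Fin n} {r : ℕ}
    (h : (X j * f).IsHomogeneous (r + 1)) : f.IsHomogeneous r := by
  intro d hd
  have := h (by rwa [coeff_X_mul])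
  rw [weight_one_eq_degOf, degOf_add, degOf_eq_degree (Finsupp.single j 1),
    Finsupp.degree_single] at this
  rw [weight_one_eq_degOf]
  omega

def LowExp (m : ℕ) (ν : Fin n →₀ ℕ) : Prop := ∀ l : Fin n, m ≤ (l : ℕ) → ν l = 0

def LowPoly (m : ℕ) (f : MvPolynomial (Fin n) k) : Prop := ∀ ν ∈ f.support, LowExp m ν

theorem LowExp.mono {m : ℕ} {μ ν : Fin n →₀ ℕ} (hμ : LowExp m μ) (h : ν ≤ μ) : LowExp m ν :=
  fun l hl => Nat.eq_zero_of_le_zero (hμ l hl ▸ h l)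

theorem LowExp.add {m : ℕ} {μ ν : Fin n →₀ ℕ} (hμ : LowExp m μ) (hν : LowExp m ν) :
    LowExp m (μ + ν) :=
  fun l hl => by simp [hμ l hl, hν l hl]

theorem LowPoly.mono_support {m : ℕ} {f g : MvPolynomial (Fin n) k} (hf : LowPoly m f)
    (h : g.support ⊆ f.support) : LowPoly m g :=
  fun ν hν => hf ν (h hν)

theorem LowPoly.monomial_one_mul {m : ℕ} {δ : Fin n →₀ ℕ} {f : MvPolynomial (Fin n) k}
    (hδ : LowExp m δ) (hf : LowPoly m f) : LowPoly m (monomial δ 1 * f) := by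
  intro ν hν
  obtain ⟨hδν, hν⟩ := mem_support_monomial_one_mul.mp hν
  rw [← add_tsub_cancel_of_le hδν]
  exact hδ.add (hf _ hν)

theorem LowPoly.of_X_mul {m : ℕ} {j : Fin n} {f : MvPolynomial (Fin n) k}
    (h : LowPoly m (X j * f)) : LowPoly m f :=
  fun ν hν => (h _ (by rwa [mem_support_iff, coeff_X_mul, ← mem_support_iff])).mono
    le_add_self

/-! ### Setting the last variables to zero -/

theorem aeval_monomial_eq_self {σ R : Type*} [CommSemiring R] {g : σ → MvPolynomial σ R}
    {ν : σ →₀ ℕ} (c : R) (h : ∀ j ∈ ν.support, g j = X j) :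
    aeval g (monomial ν c) = monomial ν c := by
  rw [aeval_monomial, monomial_eq, algebraMap_eq, Finsupp.prod_congr fun j hj => by rw [h j hj]]

theorem aeval_monomial_eq_zero {σ R : Type*} [CommSemiring R] {g : σ → MvPolynomial σ R}
    {ν : σ →₀ ℕ} (c : R) {j : σ} (hj : ν j ≠ 0) (hg : g j = 0) : aeval g (monomial ν c) = 0 := by
  rw [aeval_monomial, Finsupp.prod,
    Finset.prod_eq_zero (Finsupp.mem_support_iff.mpr hj) (by rw [hg, zero_pow hj]), mul_zero]

section Evaluation

variable {i : ℕ} {ν : Fin n →₀ ℕ}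

theorem LowExp.lt_of_mem_support {m : ℕ} (hν : LowExp m ν) {j : Fin n} (hj : j ∈ ν.support) :
    (j : ℕ) < m := by
  by_contra h
  exact Finsupp.mem_support_iff.mp hj (hν j (not_lt.mp h))

theorem exists_ne_zero_of_not_lowExp {m : ℕ} (hν : ¬ LowExp m ν) :
    ∃ l : Fin n, m ≤ (l : ℕ) ∧ ν l ≠ 0 := by
  simpa [LowExp] using hν

theorem evalZero_monomial_of_lowExp (c : k) (hν : LowExp (n - i) ν) :
    evalZero k n i (monomial ν c) = monomial ν c :=
  aeval_monomial_eq_self c fun _ hj => if_pos (hν.lt_of_mem_support hj)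

theorem evalZero_monomial_of_not_lowExp (c : k) (hν : ¬ LowExp (n - i) ν) :
    evalZero k n i (monomial ν c) = 0 := by
  obtain ⟨l, hl, hνl⟩ := exists_ne_zero_of_not_lowExp hν
  exact aeval_monomial_eq_zero c hνl (if_neg (by omega))

/-- The variable `x_{n-i}` of the paper (variables are indexed from `0` here). -/
def xVar {i : ℕ} (hi : i < n) : Fin n :=
  ⟨n - 1 - i, (Nat.sub_le (n - 1) i).trans_lt (Nat.sub_one_lt_of_lt hi)⟩

theorem evalOne_monomial_of_lowExp (hi : i < n) (c : k) (hν : LowExp (n - i) ν) :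
    evalOne k n i (monomial ν c) = monomial (ν.erase (xVar hi)) c := by
  have hsplit : monomial ν c = monomial (ν.erase (xVar hi)) c * X (xVar hi) ^ ν (xVar hi) := by
    rw [← monomial_add_single, Finsupp.erase_add_single]
  rw [hsplit, map_mul, map_pow, evalOne, aeval_X, if_neg (by simp [xVar]; omega),
    if_pos (by simp [xVar]; omega), one_pow, mul_one]
  refine aeval_monomial_eq_self c fun j hj => if_pos ?_
  rw [Finsupp.support_erase, Finset.mem_erase] at hj
  have hjlow := hν.lt_of_mem_support hj.2
  have hjx : (j : ℕ) ≠ n - 1 - i := fun h => hj.1 (Fin.ext h)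
  omega

theorem evalOne_monomial_of_not_lowExp (hi : i < n) (c : k) (hν : ¬ LowExp (n - i) ν) :
    evalOne k n i (monomial ν c) = 0 := by
  obtain ⟨l, hl, hνl⟩ := exists_ne_zero_of_not_lowExp hν
  exact aeval_monomial_eq_zero c hνl (by rw [if_neg (by omega), if_neg (by omega)])

variable (i)

open Classical in
theorem coeff_evalZero (f : MvPolynomial (Fin n) k) (μ : Fin n →₀ ℕ) :
    coeff μ (evalZero k n i f) = if LowExp (n - i) μ then coeff μ f else 0 := by
  induction f using MvPolynomial.induction_on' with
  | monomial ν c =>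
    by_cases hν : LowExp (n - i) ν
    · rw [evalZero_monomial_of_lowExp c hν, coeff_monomial]
      split_ifs <;> simp_all
    · rw [evalZero_monomial_of_not_lowExp c hν, coeff_zero, coeff_monomial]
      split_ifs <;> simp_all
  | add p q hp hq =>
    rw [map_add, coeff_add, hp, hq, coeff_add]
    split_ifs <;> simp

theorem lowPoly_evalZero (f : MvPolynomial (Fin n) k) : LowPoly (n - i) (evalZero k n i f) :=
  fun ν hν => by
    classical
    by_contra h
    rw [mem_support_iff, coeff_evalZero, if_neg h] at hν
    exact hν rfl

theorem evalZero_eq_self {f : MvPolynomial (Fin n) k} (hf : LowPoly (n - i) f) :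
    evalZero k n i f = f := by
  classical
  ext μ
  rw [coeff_evalZero]
  split_ifs with h
  · rfl
  · exact (notMem_support_iff.mp fun hμ => h (hf μ hμ)).symm

theorem support_evalZero_subset (f : MvPolynomial (Fin n) k) :
    (evalZero k n i f).support ⊆ f.support := fun μ hμ => by
  classical
  rw [mem_support_iff, coeff_evalZero] at hμ
  split_ifs at hμ
  · exact mem_support_iff.mpr hμ
  · exact absurd rfl hμ

theorem homogeneousComponent_evalZero (r : ℕ) (f : MvPolynomial (Fin n) k) :
    homogeneousComponent r (evalZero k n i f) = evalZero k n i (homogeneousComponent r f) := by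
  classical
  ext μ
  simp only [coeff_homogeneousComponent, coeff_evalZero]
  split_ifs <;> rfl

variable {i}

theorem isLeadingExp_evalZero {f : MvPolynomial (Fin n) k} {μ : Fin n →₀ ℕ}
    (h : IsLeadingExp f μ) (hμ : LowExp (n - i) μ) : IsLeadingExp (evalZero k n i f) μ := by
  classical
  refine ⟨?_, fun ν hν => h.2 ν (support_evalZero_subset i f hν)⟩
  rw [mem_support_iff, coeff_evalZero, if_pos hμ, ← mem_support_iff]
  exact h.1

/-- For homogeneous `f`, the terms killed by `evalZero` lie revlex-below the surviving ones. -/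
theorem IsLeadingExp.of_evalZero {f : MvPolynomial (Fin n) k} {μ : Fin n →₀ ℕ} {r : ℕ}
    (hf : f.IsHomogeneous r) (h : IsLeadingExp (evalZero k n i f) μ) : IsLeadingExp f μ := by
  classical
  have hμf := support_evalZero_subset i f h.1
  refine ⟨hμf, fun ν hν => ?_⟩
  by_cases hνlow : LowExp (n - i) ν
  · exact h.2 ν (by rwa [mem_support_iff, coeff_evalZero, if_pos hνlow, ← mem_support_iff])
  · obtain ⟨l, hl, hνl⟩ := exists_ne_zero_of_not_lowExp hνlow
    exact Or.inr (revLexLT_of_degOf_eq (by rw [hf.degOf_eq hν, hf.degOf_eq hμf])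
      (lowPoly_evalZero i f μ h.1) hl hνl)

end Evaluation

/-! ### The monomial ideals `J_i` and `J̃_i` -/

theorem Finsupp.erase_le_self {α : Type*} (a : α) (f : α →₀ ℕ) : f.erase a ≤ f :=
  calc f.erase a ≤ f.erase a + Finsupp.single a (f a) := le_self_add
    _ = f := Finsupp.erase_add_single a f

theorem Ideal.map_span_monomial_one {σ R F : Type*} [CommSemiring R]
    [FunLike F (MvPolynomial σ R) (MvPolynomial σ R)]
    [RingHomClass F (MvPolynomial σ R) (MvPolynomial σ R)] (φ : F) (T : Set (σ →₀ ℕ))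
    (P : (σ →₀ ℕ) → Prop) (e : (σ →₀ ℕ) → σ →₀ ℕ)
    (h₁ : ∀ μ, P μ → φ (monomial μ 1) = monomial (e μ) 1)
    (h₀ : ∀ μ, ¬ P μ → φ (monomial μ 1) = 0) :
    Ideal.map φ (Ideal.span ((fun μ => monomial μ (1 : R)) '' T)) =
      Ideal.span ((fun μ => monomial μ 1) '' (e '' {μ ∈ T | P μ})) := by
  rw [Ideal.map_span, Set.image_image]
  apply le_antisymm <;> rw [Ideal.span_le]
  · rintro _ ⟨μ, hμ, rfl⟩
    by_cases hP : P μ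
    · simp only [h₁ μ hP]
      exact Ideal.subset_span ⟨e μ, ⟨μ, ⟨hμ, hP⟩, rfl⟩, rfl⟩
    · simp only [h₀ μ hP]
      exact Ideal.zero_mem _
  · rintro _ ⟨_, ⟨μ, ⟨hμ, hP⟩, rfl⟩, rfl⟩
    exact Ideal.subset_span ⟨μ, hμ, h₁ μ hP⟩

section InitialIdeal

variable (I : Ideal (MvPolynomial (Fin n) k)) {i : ℕ}

def leadExps : Set (Fin n →₀ ℕ) := {μ | ∃ f ∈ I, IsLeadingExp f μ}

variable (i) in
def lowLeadExps : Set (Fin n →₀ ℕ) := {μ ∈ leadExps I | LowExp (n - i) μ}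

theorem initialIdeal_eq_span :
    initialIdeal I = Ideal.span ((fun μ => monomial μ (1 : k)) '' leadExps I) := by
  rw [initialIdeal]
  congr 1
  ext g
  constructor
  · rintro ⟨f, hf, -, μ, hμ, hmax, rfl⟩
    exact ⟨μ, ⟨f, hf, hμ, hmax⟩, rfl⟩
  · rintro ⟨μ, ⟨f, hf, hf'⟩, rfl⟩
    exact ⟨f, hf, hf'.ne_zero, μ, hf'.1, hf'.2, rfl⟩

theorem Jlow_eq_span :
    Jlow i I = Ideal.span ((fun μ => monomial μ (1 : k)) '' lowLeadExps I i) := by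
  rw [Jlow, initialIdeal_eq_span, Ideal.map_span_monomial_one _ _ (LowExp (n - i)) id
    (fun _ h => evalZero_monomial_of_lowExp 1 h) (fun _ h => evalZero_monomial_of_not_lowExp 1 h),
    Set.image_id]
  rfl

theorem Jtil_eq_span (hi : i < n) : Jtil i I =
    Ideal.span ((fun μ => monomial μ (1 : k)) '' ((·.erase (xVar hi)) '' lowLeadExps I i)) := by
  rw [Jtil, initialIdeal_eq_span, Ideal.map_span_monomial_one _ _ (LowExp (n - i)) _
    (fun _ h => evalOne_monomial_of_lowExp hi 1 h)
    (fun _ h => evalOne_monomial_of_not_lowExp hi 1 h)]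
  rfl

theorem mem_Jlow_iff (f : MvPolynomial (Fin n) k) :
    f ∈ Jlow i I ↔ ∀ μ ∈ f.support, ∃ τ ∈ lowLeadExps I i, τ ≤ μ := by
  rw [Jlow_eq_span, mem_ideal_span_monomial_image]

theorem mem_Jtil_iff (hi : i < n) (f : MvPolynomial (Fin n) k) :
    f ∈ Jtil i I ↔ ∀ μ ∈ f.support, ∃ τ ∈ lowLeadExps I i, τ.erase (xVar hi) ≤ μ := by
  simp only [Jtil_eq_span I hi, mem_ideal_span_monomial_image, Set.exists_mem_image]

theorem monomial_mem_Jlow_iff (μ : Fin n →₀ ℕ) :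
    monomial μ (1 : k) ∈ Jlow i I ↔ ∃ τ ∈ lowLeadExps I i, τ ≤ μ := by
  classical
  simp [mem_Jlow_iff, support_monomial]

theorem monomial_mem_Jtil_iff (hi : i < n) (μ : Fin n →₀ ℕ) :
    monomial μ (1 : k) ∈ Jtil i I ↔ ∃ τ ∈ lowLeadExps I i, τ.erase (xVar hi) ≤ μ := by
  classical
  simp [mem_Jtil_iff I hi, support_monomial]

theorem Jlow_le_Jtil (hi : i < n) : Jlow i I ≤ Jtil i I := fun f hf =>
  (mem_Jtil_iff I hi f).mpr fun μ hμ => by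
    obtain ⟨τ, hτ, hle⟩ := (mem_Jlow_iff I f).mp hf μ hμ
    exact ⟨τ, hτ, (Finsupp.erase_le_self _ τ).trans hle⟩

theorem Jtil_le_Jlow_iff (hi : i < n) : Jtil i I ≤ Jlow i I ↔
    ∀ τ ∈ lowLeadExps I i, ∃ τ' ∈ lowLeadExps I i, τ' ≤ τ.erase (xVar hi) := by
  constructor
  · intro h τ hτ
    exact (monomial_mem_Jlow_iff I _).mp (h ((monomial_mem_Jtil_iff I hi _).mpr ⟨τ, hτ, le_rfl⟩))
  · intro h f hf
    refine (mem_Jlow_iff I f).mpr fun μ hμ => ?_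
    obtain ⟨τ, hτ, hle⟩ := (mem_Jtil_iff I hi f).mp hf μ hμ
    obtain ⟨τ', hτ', hle'⟩ := h τ hτ
    exact ⟨τ', hτ', hle'.trans hle⟩

theorem cInv_eq_bot_iff (hi : i < n) : cInv i I = ⊥ ↔ Jtil i I = Jlow i I := by
  rw [cInv, sSup_eq_bot]
  constructor
  · intro h
    refine le_antisymm ((Jtil_le_Jlow_iff I hi).mpr fun τ hτ => ?_) (Jlow_le_Jtil I hi)
    by_contra hτ'
    have hmem : monomial (τ.erase (xVar hi)) (1 : k) ∈ Jtil i I :=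
      (monomial_mem_Jtil_iff I hi _).mpr ⟨τ, hτ, le_rfl⟩
    have hnot : monomial (τ.erase (xVar hi)) (1 : k) ∉ Jlow i I := by
      rwa [monomial_mem_Jlow_iff]
    have hsupp : monomial (τ.erase (xVar hi)) (1 : k) ∈
        supported k {j : Fin n | (j : ℕ) < n - i} := by
      rw [mem_supported, vars_monomial one_ne_zero]
      exact fun j hj => (hτ.2.mono (Finsupp.erase_le_self _ τ)).lt_of_mem_support hj
    exact WithBot.coe_ne_bot (h _ ⟨_, rfl, _, hmem, hsupp, isHomogeneous_monomial 1 rfl, hnot⟩)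
  · rintro h _ ⟨r, rfl, f, hf, -, -, hnf⟩
    exact absurd (h ▸ hf) hnf

end InitialIdeal

/-! ### The ideal `(I, x_n, …, x_{n-i+1})` -/

section LastVariables

variable {i : ℕ}

variable (i) in
/-- `(x_{n-i+1}, …, x_n)` in the paper's indexing. -/
def lastVars : Ideal (MvPolynomial (Fin n) k) := Ideal.span (X '' {l : Fin n | n - i ≤ (l : ℕ)})

theorem mem_lastVars_iff {f : MvPolynomial (Fin n) k} :
    f ∈ lastVars i ↔ ∀ μ ∈ f.support, ¬ LowExp (n - i) μ := by
  simp [lastVars, mem_ideal_span_X_image, LowExp]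

variable (i) in
theorem sub_evalZero_mem_lastVars (f : MvPolynomial (Fin n) k) :
    f - evalZero k n i f ∈ lastVars i := by
  classical
  refine mem_lastVars_iff.mpr fun μ hμ hlow => ?_
  rw [mem_support_iff, coeff_sub, coeff_evalZero, if_pos hlow, sub_self] at hμ
  exact hμ rfl

theorem evalZero_eq_zero_of_mem_lastVars {f : MvPolynomial (Fin n) k} (hf : f ∈ lastVars i) :
    evalZero k n i f = 0 := by
  classical
  ext μ
  rw [coeff_evalZero, coeff_zero]
  split_ifs with hμ
  · exact notMem_support_iff.mp fun h => mem_lastVars_iff.mp hf μ h hμ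
  · rfl

variable (I : Ideal (MvPolynomial (Fin n) k))

theorem mem_sup_lastVars_iff {f : MvPolynomial (Fin n) k} (hf : LowPoly (n - i) f) :
    f ∈ I ⊔ lastVars i ↔ ∃ F ∈ I, evalZero k n i F = f := by
  constructor
  · intro h
    obtain ⟨a, ha, b, hb, rfl⟩ := Submodule.mem_sup.mp h
    refine ⟨a, ha, ?_⟩
    rw [← evalZero_eq_self i hf, map_add, evalZero_eq_zero_of_mem_lastVars hb, add_zero]
  · rintro ⟨F, hF, rfl⟩
    rw [← sub_sub_cancel F (evalZero k n i F)]
    exact Submodule.sub_mem _ (Ideal.mem_sup_left hF)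
      (Ideal.mem_sup_right (sub_evalZero_mem_lastVars i F))

theorem support_homogeneousComponent_subset (r : ℕ) (f : MvPolynomial (Fin n) k) :
    (homogeneousComponent r f).support ⊆ f.support := by
  rw [support_homogeneousComponent]
  exact Finset.filter_subset _ _

theorem HomogIdeal.sup_lastVars {I : Ideal (MvPolynomial (Fin n) k)} (hI : HomogIdeal I) :
    HomogIdeal (I ⊔ lastVars i) := by
  intro f hf r
  obtain ⟨a, ha, b, hb, rfl⟩ := Submodule.mem_sup.mp hf
  rw [map_add]
  refine Submodule.add_mem _ (Ideal.mem_sup_left (hI a ha r)) (Ideal.mem_sup_right ?_)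
  exact mem_lastVars_iff.mpr fun μ hμ =>
    mem_lastVars_iff.mp hb μ (support_homogeneousComponent_subset r b hμ)

variable {I}

theorem exists_isHomogeneous_isLeadingExp (hI : HomogIdeal I) {μ : Fin n →₀ ℕ}
    (hμ : μ ∈ leadExps I) : ∃ g ∈ I, g.IsHomogeneous (degOf μ) ∧ IsLeadingExp g μ := by
  obtain ⟨f, hf, hμf⟩ := hμ
  refine ⟨_, hI f hf _, homogeneousComponent_isHomogeneous _ _, ?_,
    fun ν hν => hμf.2 ν (support_homogeneousComponent_subset _ f hν)⟩
  rw [support_homogeneousComponent, Finset.mem_filter]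
  exact ⟨hμf.1, rfl⟩

theorem mem_lowLeadExps_of_isLeadingExp (hI : HomogIdeal I) {f : MvPolynomial (Fin n) k}
    {r : ℕ} {μ : Fin n →₀ ℕ} (hf : f ∈ I ⊔ lastVars i) (hlow : LowPoly (n - i) f)
    (hhom : f.IsHomogeneous r) (hμ : IsLeadingExp f μ) : μ ∈ lowLeadExps I i := by
  obtain ⟨F, hF, rfl⟩ := (mem_sup_lastVars_iff I hlow).mp hf
  have hG : evalZero k n i (homogeneousComponent r F) = evalZero k n i F := by
    rw [← homogeneousComponent_evalZero, homogeneousComponent_eq_self hhom]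
  exact ⟨⟨_, hI F hF r, .of_evalZero (homogeneousComponent_isHomogeneous r F) (hG ▸ hμ)⟩,
    hlow μ hμ.1⟩

theorem exists_isLeadingExp_of_le (hI : HomogIdeal I) {τ μ : Fin n →₀ ℕ}
    (hτ : τ ∈ lowLeadExps I i) (hle : τ ≤ μ) (hμ : LowExp (n - i) μ) :
    ∃ g ∈ I ⊔ lastVars i,
      LowPoly (n - i) g ∧ g.IsHomogeneous (degOf μ) ∧ IsLeadingExp g μ := by
  obtain ⟨h, hhI, hhom, hτh⟩ := exists_isHomogeneous_isLeadingExp hI hτ.1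
  have hπh : evalZero k n i h ∈ I ⊔ lastVars i :=
    (mem_sup_lastVars_iff I (lowPoly_evalZero i h)).mpr ⟨h, hhI, rfl⟩
  have hdeg : degOf (μ - τ) + degOf τ = degOf μ := by rw [← degOf_add, tsub_add_cancel_of_le hle]
  refine ⟨monomial (μ - τ) 1 * evalZero k n i h, Ideal.mul_mem_left _ _ hπh,
    (lowPoly_evalZero i h).monomial_one_mul (hμ.mono tsub_le_self), ?_, ?_⟩
  · exact hdeg ▸ (isHomogeneous_monomial 1 rfl).mul
      (hhom.of_support_subset (support_evalZero_subset i h))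
  · simpa only [tsub_add_cancel_of_le hle] using
      (isLeadingExp_evalZero hτh hτ.2).monomial_one_mul (μ - τ)

end LastVariables

/-! ### Multiplication by `x_{n-i}` -/

theorem homogeneousComponent_succ_X_mul {σ R : Type*} [CommSemiring R] (j : σ) (r : ℕ)
    (g : MvPolynomial σ R) :
    homogeneousComponent (r + 1) (X j * g) = X j * homogeneousComponent r g := by
  classical
  ext ν
  rw [coeff_homogeneousComponent, coeff_X_mul', coeff_X_mul', coeff_homogeneousComponent]
  by_cases hj : j ∈ ν.support
  · have hle : Finsupp.single j 1 ≤ ν :=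
      Finsupp.single_le_iff.mpr (Nat.one_le_iff_ne_zero.mpr (Finsupp.mem_support_iff.mp hj))
    have hdeg : ν.degree = (ν - Finsupp.single j 1).degree + 1 := by
      conv_lhs => rw [← tsub_add_cancel_of_le hle]
      rw [map_add, Finsupp.degree_single]
    simp only [hj, if_true, hdeg, Nat.add_right_cancel_iff]
  · simp [hj]

theorem LowPoly.sub_smul {m : ℕ} {f g : MvPolynomial (Fin n) k} (hf : LowPoly m f)
    (hg : LowPoly m g) (c : k) : LowPoly m (f - c • g) := by
  classical
  intro ν hν
  rcases Finset.mem_union.mp (support_sub _ f _ hν) with hνf | hνg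
  · exact hf ν hνf
  · exact hg ν (support_smul hνg)

section Colon

variable {I : Ideal (MvPolynomial (Fin n) k)} {i : ℕ}

theorem lowExp_single_xVar (hi : i < n) (m : ℕ) :
    LowExp (n - i) (Finsupp.single (xVar hi) m) := by
  intro l hl
  rw [Finsupp.single_apply, if_neg]
  intro h
  have : (xVar hi : ℕ) = l := congrArg Fin.val h
  simp only [xVar] at this
  omega

/-- A term of `g` free of `x_j` would be revlex-larger than the leading one. -/
theorem IsLeadingExp.X_dvd {g : MvPolynomial (Fin n) k} {μ : Fin n →₀ ℕ} {r : ℕ} {j : Fin n}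
    (h : IsLeadingExp g μ) (hhom : g.IsHomogeneous r) (hlow : LowPoly (j + 1) g)
    (hμ : μ j ≠ 0) : X j ∣ g := by
  rw [← Ideal.mem_span_singleton, ← Set.image_singleton, mem_ideal_span_X_image]
  refine fun ν hν => ⟨j, rfl, fun hνj => ?_⟩
  have hb : ∀ l : Fin n, (j : ℕ) ≤ l → ν l = 0 := fun l hl => by
    rcases hl.lt_or_eq with hl | hl
    · exact hlow ν hν l hl
    · rwa [← Fin.ext hl]
  have hμν : RevLexLT μ ν :=
    revLexLT_of_degOf_eq (by rw [hhom.degOf_eq h.1, hhom.degOf_eq hν]) hb le_rfl hμ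
  rcases h.2 ν hν with rfl | hνμ
  · exact hμν.irrefl
  · exact hνμ.asymm hμν

theorem exists_lowExp_colon_witness (hi : i < n) (h : ¬ Jtil i I ≤ Jlow i I) :
    ∃ u, LowExp (n - i) u ∧ (∀ τ ∈ lowLeadExps I i, ¬ τ ≤ u) ∧
      ∃ τ ∈ lowLeadExps I i, τ ≤ u + Finsupp.single (xVar hi) 1 := by
  rw [Jtil_le_Jlow_iff I hi] at h
  push Not at h
  obtain ⟨τ, hτ, hnot⟩ := h
  -- `x_{n-i} ^ τ_{n-i}` moves `τ.erase (xVar hi)` into `J_i`; take the last power that does not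
  let p : ℕ → Prop := fun m =>
    ∃ τ' ∈ lowLeadExps I i, τ' ≤ τ.erase (xVar hi) + Finsupp.single (xVar hi) m
  have hp : p (τ (xVar hi)) := ⟨τ, hτ, (Finsupp.erase_add_single _ τ).ge⟩
  have hp0 : ¬ p 0 := by simpa [p] using hnot
  obtain ⟨m, hm, hm1⟩ := Nat.exists_not_and_succ_of_not_zero_of_exists hp0 ⟨_, hp⟩
  refine ⟨_, (hτ.2.mono (Finsupp.erase_le_self _ τ)).add (lowExp_single_xVar hi m),
    by simpa [p] using hm, ?_⟩
  simpa only [p, Finsupp.single_add, add_assoc] using hm1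

theorem exists_mul_X_mem_not_mem (hI : HomogIdeal I) (hi : i < n)
    (h : ¬ Jtil i I ≤ Jlow i I) :
    ∃ f, f * X (xVar hi) ∈ I ⊔ lastVars i ∧ f ∉ I ⊔ lastVars i := by
  obtain ⟨u, hu, hunot, τ, hτ, hle⟩ := exists_lowExp_colon_witness hi h
  obtain ⟨g, hg, hglow, hghom, hgu⟩ :=
    exists_isLeadingExp_of_le hI hτ hle (hu.add (lowExp_single_xVar hi 1))
  have hsucc : (xVar hi : ℕ) + 1 = n - i := by simp only [xVar]; omega
  obtain ⟨f, rfl⟩ := hgu.X_dvd hghom (hsucc ▸ hglow) (by simp)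
  rw [degOf_add, degOf_eq_degree (Finsupp.single _ _), Finsupp.degree_single] at hghom
  have hfu : IsLeadingExp f u := .of_X_mul (by rwa [add_comm] at hgu)
  refine ⟨f, by rwa [mul_comm], fun hf => hunot u ?_ le_rfl⟩
  exact mem_lowLeadExps_of_isLeadingExp hI hf hglow.of_X_mul hghom.of_X_mul hfu

theorem mem_of_X_mul_mem_of_isHomogeneous (hI : HomogIdeal I) (hi : i < n)
    (hJ : Jtil i I ≤ Jlow i I) {r : ℕ} (μ : Fin n →₀ ℕ) {f : MvPolynomial (Fin n) k}
    (hμ : IsLeadingExp f μ) (hlow : LowPoly (n - i) f) (hhom : f.IsHomogeneous r)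
    (hXf : X (xVar hi) * f ∈ I ⊔ lastVars i) : f ∈ I ⊔ lastVars i := by
  induction μ using wellFounded_revLexLT.induction generalizing f with
  | _ μ ih =>
  have hXμ : Finsupp.single (xVar hi) 1 + μ ∈ lowLeadExps I i :=
    mem_lowLeadExps_of_isLeadingExp hI hXf (hlow.monomial_one_mul (lowExp_single_xVar hi 1))
      ((isHomogeneous_X k _).mul hhom) (hμ.monomial_one_mul _)
  obtain ⟨τ, hτ, hτle⟩ := (Jtil_le_Jlow_iff I hi).mp hJ _ hXμ
  have hτμ : τ ≤ μ := by
    refine hτle.trans ?_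
    rw [Finsupp.erase_add, Finsupp.erase_single, zero_add]
    exact Finsupp.erase_le_self _ μ
  obtain ⟨g, hg, hglow, hghom, hgμ⟩ := exists_isLeadingExp_of_le hI hτ hτμ (hlow μ hμ.1)
  rw [hhom.degOf_eq hμ.1] at hghom
  set c := coeff μ f / coeff μ g
  rw [← sub_add_cancel f (c • g)]
  refine add_mem ?_ (Submodule.smul_of_tower_mem _ c hg)
  obtain h0 | ⟨ν, hν⟩ := (eq_or_ne (f - c • g) 0).imp id exists_isLeadingExp
  · rw [h0]
    exact zero_mem _
  refine ih ν (hμ.revLexLT_of_mem_support_sub hgμ hν.1) hν (hlow.sub_smul hglow c)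
    (hhom.sub (hghom.of_support_subset support_smul)) ?_
  rw [mul_sub, mul_smul_comm]
  exact sub_mem hXf (Submodule.smul_of_tower_mem _ c (Ideal.mul_mem_left _ _ hg))

theorem mem_of_mul_X_mem (hI : HomogIdeal I) (hi : i < n) (hJ : Jtil i I ≤ Jlow i I)
    {f : MvPolynomial (Fin n) k} (hf : f * X (xVar hi) ∈ I ⊔ lastVars i) :
    f ∈ I ⊔ lastVars i := by
  set g := evalZero k n i f
  have hfg : f - g ∈ I ⊔ lastVars i := Ideal.mem_sup_right (sub_evalZero_mem_lastVars i f)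
  have hXg : X (xVar hi) * g ∈ I ⊔ lastVars i := by
    rw [show X (xVar hi) * g = f * X (xVar hi) - (f - g) * X (xVar hi) by ring]
    exact sub_mem hf (Ideal.mul_mem_right _ _ hfg)
  rw [← sub_add_cancel f g]
  refine add_mem hfg ?_
  rw [← sum_homogeneousComponent g]
  refine Submodule.sum_mem _ fun r _ => ?_
  obtain h0 | ⟨μ, hμ⟩ := (eq_or_ne (homogeneousComponent r g) 0).imp id exists_isLeadingExp
  · rw [h0]
    exact zero_mem _
  refine mem_of_X_mul_mem_of_isHomogeneous hI hi hJ μ hμ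
    ((lowPoly_evalZero i f).mono_support (support_homogeneousComponent_subset r g))
    (homogeneousComponent_isHomogeneous r g) ?_
  rw [← homogeneousComponent_succ_X_mul]
  exact hI.sup_lastVars _ hXg (r + 1)

theorem colon_sup_lastVars_eq_iff (hI : HomogIdeal I) (hi : i < n) :
    (I ⊔ lastVars i).colon (Ideal.span {(X (xVar hi) : MvPolynomial (Fin n) k)}) = I ⊔ lastVars i ↔
      Jtil i I = Jlow i I := by
  constructor
  · intro h
    refine le_antisymm ?_ (Jlow_le_Jtil I hi)
    by_contra hJ
    obtain ⟨f, hfX, hf⟩ := exists_mul_X_mem_not_mem hI hi hJ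
    exact hf (h ▸ Ideal.mem_colon_span_singleton.mpr hfX)
  · intro h
    refine le_antisymm (fun f hf => ?_) (fun f hf => ?_)
    · exact mem_of_mul_X_mem hI hi h.le (Ideal.mem_colon_span_singleton.mp hf)
    · exact Ideal.mem_colon_span_singleton.mpr (Ideal.mul_mem_right _ _ hf)

end Colon

theorem partIdeal_eq_sup_lastVars {i : ℕ} (I : Ideal (MvPolynomial (Fin n) k)) (hi : i < n) :
    partIdeal I (fun j : Fin (i + 1) => (X ⟨n - 1 - (j : ℕ),
      (Nat.sub_le (n - 1) j).trans_lt (Nat.sub_one_lt_of_lt hi)⟩ : MvPolynomial (Fin n) k)) i =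
      I ⊔ lastVars i := by
  rw [partIdeal, lastVars]
  congr 2
  ext p
  simp only [Set.mem_image, Set.mem_ofPred_eq]
  constructor
  · rintro ⟨j, hj, rfl⟩
    exact ⟨_, show n - i ≤ n - 1 - (j : ℕ) by omega, rfl⟩
  · rintro ⟨l, hl, rfl⟩
    exact ⟨⟨n - 1 - l, by omega⟩, show n - 1 - (l : ℕ) < i by omega,
      congrArg X (Fin.ext (show n - 1 - (n - 1 - (l : ℕ)) = l by omega))⟩

/-- Corollary 3.2: `x_{n-i}` is a non-zerodivisor on
`S/(I, xₙ, …, x_{n-i+1})` if and only if `c_i(I) = -∞`, i.e. iff `J̃_i = J_i`. -/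
theorem stmt_4 {k : Type*} [Field k] {n : ℕ} (I : Ideal (MvPolynomial (Fin n) k))
    (hI : HomogIdeal I) (i : ℕ) (hi : i < n) :
    (((partIdeal I (fun j : Fin (i + 1) =>
          (X ⟨n - 1 - (j : ℕ), by omega⟩ : MvPolynomial (Fin n) k)) i).colon
        (Ideal.span {(X ⟨n - 1 - i, by omega⟩ : MvPolynomial (Fin n) k)})
      = partIdeal I (fun j : Fin (i + 1) =>
          (X ⟨n - 1 - (j : ℕ), by omega⟩ : MvPolynomial (Fin n) k)) i)
      ↔ cInv i I = ⊥) ∧ (cInv i I = ⊥ ↔ Jtil i I = Jlow i I) := by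
  rw [partIdeal_eq_sup_lastVars I hi, cInv_eq_bot_iff I hi]
  exact ⟨colon_sup_lastVars_eq_iff hI hi, Iff.rfl⟩
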